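/- arXiv:1604.05410 — 6 statements merged into one kernel-verified Lean document; each statement's English description precedes it below -/
import Mathlib

section
/- Let a : ℕ × ℕ → ℂ be a function of two positive-integer variables with Σ_{n₁,n₂=1}^∞ |a(n₁,n₂)| < ∞. Then lim_{x,y → ∞} (1/log(min(x,y))) · Σ_{n₁ ≤ x, n₂ ≤ y} a(n₁,n₂) · log(min(x/n₁, y/n₂)) = Σ_{n₁,n₂=1}^∞ a(n₁,n₂). -/
open Filter Finset Topology

/-!
Write the partial sum, divided by `log (min x y)`, as `∑ a(n₁, n₂) w(n₁, n₂)` over all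
`n₁, n₂ ≥ 1`, where `w = log (min (x/n₁) (y/n₂)) / log (min x y)` for `n₁ ≤ x`, `n₂ ≤ y` and
`w = 0` otherwise. Since `log (min (x/n₁) (y/n₂))` differs from `log (min x y)` by at most
`max (log n₁) (log n₂)`, each weight tends to `1`; and `0 ≤ w ≤ 1` throughout, so the absolute
summability of `a` lets dominated convergence (Tannery's theorem) pass to the limit.
-/

namespace Real

lemma log_min {x y : ℝ} (hx : 0 < x) (hy : 0 < y) : log (min x y) = min (log x) (log y) := by
  rcases le_total x y with h | h
  · rw [min_eq_left h, min_eq_left (log_le_log hx h)]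
  · rw [min_eq_right h, min_eq_right (log_le_log hy h)]

lemma abs_log_min_div_sub_log_min_le {x y u v : ℝ} (hx : 0 < x) (hy : 0 < y) (hu : 0 < u)
    (hv : 0 < v) : |log (min (x / u) (y / v)) - log (min x y)| ≤ max |log u| |log v| := by
  rw [log_min (div_pos hx hu) (div_pos hy hv), log_min hx hy, log_div hx.ne' hu.ne',
    log_div hy.ne' hv.ne']
  simpa only [sub_sub_cancel_left, abs_neg] using
    abs_min_sub_min_le_max (log x - log u) (log y - log v) (log x) (log y)

lemma log_min_div_nonneg {x y u v : ℝ} (hu : 1 ≤ u) (hux : u ≤ x) (hv : 1 ≤ v) (hvy : v ≤ y) :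
    0 ≤ log (min (x / u) (y / v)) :=
  log_nonneg (le_min ((one_le_div (by linarith)).2 hux) ((one_le_div (by linarith)).2 hvy))

lemma log_min_div_le_log_min {x y u v : ℝ} (hx : 0 < x) (hy : 0 < y) (hu : 1 ≤ u) (hv : 1 ≤ v) :
    log (min (x / u) (y / v)) ≤ log (min x y) :=
  log_le_log (lt_min (div_pos hx (by linarith)) (div_pos hy (by linarith)))
    (min_le_min (div_le_self hx.le hu) (div_le_self hy.le hv))

end Real

open Real

noncomputable def logMinWeight (p : ℝ × ℝ) (u v : ℝ) : ℝ :=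
  log (min (p.1 / u) (p.2 / v)) / log (min p.1 p.2)

lemma abs_logMinWeight_le_one {p : ℝ × ℝ} {u v : ℝ} (hu : 1 ≤ u) (hux : u ≤ p.1) (hv : 1 ≤ v)
    (hvy : v ≤ p.2) : |logMinWeight p u v| ≤ 1 := by
  have hnum := log_min_div_nonneg hu hux hv hvy
  have hle := log_min_div_le_log_min (x := p.1) (y := p.2) (by linarith) (by linarith) hu hv
  rw [logMinWeight, abs_of_nonneg (div_nonneg hnum (hnum.trans hle))]
  exact div_le_one_of_le₀ hle (hnum.trans hle)

lemma tendsto_logMinWeight {u v : ℝ} (hu : 0 < u) (hv : 0 < v) :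
    Tendsto (fun p => logMinWeight p u v) (atTop ×ˢ atTop) (𝓝 1) := by
  have hmin : Tendsto (fun p : ℝ × ℝ => min p.1 p.2) (atTop ×ˢ atTop) atTop :=
    tendsto_inf_atTop _ tendsto_fst tendsto_snd
  have herr : Tendsto (fun p => logMinWeight p u v - 1) (atTop ×ˢ atTop) (𝓝 0) := by
    refine squeeze_zero_norm' ?_
      ((tendsto_const_nhds (x := max |log u| |log v|)).div_atTop (tendsto_log_atTop.comp hmin))
    filter_upwards [hmin.eventually_gt_atTop 1] with p hp
    have hL : 0 < log (min p.1 p.2) := log_pos hp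
    rw [logMinWeight, div_sub_one hL.ne', norm_div, norm_of_nonneg hL.le, norm_eq_abs]
    exact div_le_div_of_nonneg_right (abs_log_min_div_sub_log_min_le
      (by linarith [min_le_left p.1 p.2]) (by linarith [min_le_right p.1 p.2]) hu hv) hL.le
  simpa using herr.add_const 1

lemma sum_Icc_one_Icc_one_eq_tsum_pnat {M : Type*} [AddCommMonoid M] [TopologicalSpace M]
    (f : ℕ → ℕ → M) (N₁ N₂ : ℕ) :
    ∑ n₁ ∈ Icc 1 N₁, ∑ n₂ ∈ Icc 1 N₂, f n₁ n₂ =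
      ∑' q : ℕ+ × ℕ+, if (q.1 : ℕ) ≤ N₁ ∧ (q.2 : ℕ) ≤ N₂ then f q.1 q.2 else 0 := by
  let ι : ℕ+ × ℕ+ → ℕ × ℕ := fun q => (q.1, q.2)
  have hι : ι.Injective := fun q r h =>
    Prod.ext (PNat.coe_injective (congrArg Prod.fst h)) (PNat.coe_injective (congrArg Prod.snd h))
  rw [← sum_product' (f := f), ← sum_preimage ι _ hι.injOn (fun m => f m.1 m.2) ?_,
    tsum_eq_sum (s := (Icc 1 N₁ ×ˢ Icc 1 N₂).preimage ι hι.injOn) ?_]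
  · refine sum_congr rfl fun q hq => ?_
    simp only [mem_preimage, mem_product, mem_Icc, ι] at hq
    rw [if_pos ⟨hq.1.2, hq.2.2⟩]
  · intro q hq
    simp only [mem_preimage, mem_product, mem_Icc, ι, not_and] at hq
    rw [if_neg fun h => hq ⟨q.1.pos, h.1⟩ q.2.pos h.2]
  · rintro ⟨n₁, n₂⟩ hm hnot
    simp only [mem_product, mem_Icc] at hm
    exact (hnot ⟨(⟨n₁, hm.1.1⟩, ⟨n₂, hm.2.1⟩), rfl⟩).elim

noncomputable def truncatedWeightedTerm (a : ℕ → ℕ → ℂ) (p : ℝ × ℝ) (q : ℕ+ × ℕ+) : ℂ :=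
  if (q.1 : ℕ) ≤ ⌊p.1⌋₊ ∧ (q.2 : ℕ) ≤ ⌊p.2⌋₊ then a q.1 q.2 * logMinWeight p q.1 q.2 else 0

lemma norm_truncatedWeightedTerm_le (a : ℕ → ℕ → ℂ) (p : ℝ × ℝ) (q : ℕ+ × ℕ+) :
    ‖truncatedWeightedTerm a p q‖ ≤ ‖a q.1 q.2‖ := by
  unfold truncatedWeightedTerm
  split_ifs with h
  · have hq₁ : 1 ≤ ((q.1 : ℕ) : ℝ) := by exact_mod_cast q.1.pos
    have hq₂ : 1 ≤ ((q.2 : ℕ) : ℝ) := by exact_mod_cast q.2.pos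
    rw [norm_mul, Complex.norm_real, norm_eq_abs]
    exact mul_le_of_le_one_right (norm_nonneg _) (abs_logMinWeight_le_one hq₁
      ((Nat.le_floor_iff' q.1.ne_zero).1 h.1) hq₂ ((Nat.le_floor_iff' q.2.ne_zero).1 h.2))
  · simp

lemma tendsto_truncatedWeightedTerm (a : ℕ → ℕ → ℂ) (q : ℕ+ × ℕ+) :
    Tendsto (truncatedWeightedTerm a · q) (atTop ×ˢ atTop) (𝓝 (a q.1 q.2)) := by
  have hin : ∀ᶠ p : ℝ × ℝ in atTop ×ˢ atTop, (q.1 : ℕ) ≤ ⌊p.1⌋₊ ∧ (q.2 : ℕ) ≤ ⌊p.2⌋₊ :=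
    ((tendsto_nat_floor_atTop.comp tendsto_fst).eventually_ge_atTop _).and
      ((tendsto_nat_floor_atTop.comp tendsto_snd).eventually_ge_atTop _)
  have hw := tendsto_logMinWeight (u := ((q.1 : ℕ) : ℝ)) (v := ((q.2 : ℕ) : ℝ))
    (by exact_mod_cast q.1.pos) (by exact_mod_cast q.2.pos)
  refine Tendsto.congr' (hin.mono fun p hp => (if_pos hp).symm) ?_
  simpa using (Complex.continuous_ofReal.tendsto 1).comp hw |>.const_mul (a q.1 q.2)

lemma normalizedPartialSum_eq_tsum_truncatedWeightedTerm (a : ℕ → ℕ → ℂ) (p : ℝ × ℝ) :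
    (1 / (log (min p.1 p.2)) : ℂ) *
        ∑ n₁ ∈ Icc 1 ⌊p.1⌋₊, ∑ n₂ ∈ Icc 1 ⌊p.2⌋₊, a n₁ n₂ * (log (min (p.1 / n₁) (p.2 / n₂)) : ℂ) =
      ∑' q, truncatedWeightedTerm a p q := by
  unfold truncatedWeightedTerm
  rw [← sum_Icc_one_Icc_one_eq_tsum_pnat (fun n₁ n₂ => a n₁ n₂ * logMinWeight p n₁ n₂), mul_sum]
  refine sum_congr rfl fun n₁ _ => ?_
  rw [mul_sum]
  refine sum_congr rfl fun n₂ _ => ?_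
  rw [logMinWeight]
  push_cast
  ring

theorem stmt_2 (a : ℕ → ℕ → ℂ)
    (ha : Summable fun q : ℕ+ × ℕ+ => ‖a q.1 q.2‖) :
    Tendsto (fun p : ℝ × ℝ =>
      (1 / (Real.log (min p.1 p.2)) : ℂ) *
        ∑ n₁ ∈ Finset.Icc 1 ⌊p.1⌋₊, ∑ n₂ ∈ Finset.Icc 1 ⌊p.2⌋₊,
          a n₁ n₂ * (Real.log (min (p.1 / n₁) (p.2 / n₂)) : ℂ))
      (atTop ×ˢ atTop) (𝓝 (∑' q : ℕ+ × ℕ+, a q.1 q.2)) := by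
  simpa only [normalizedPartialSum_eq_tsum_truncatedWeightedTerm] using
    tendsto_tsum_of_dominated_convergence ha (tendsto_truncatedWeightedTerm a)
      (.of_forall (norm_truncatedWeightedTerm_le a))
end

section
/- For fixed reals α, β ≥ 0, Σ_{n₁, n₂ ≤ x} (log n₁)^α (log n₂)^β log(min(x/n₁, x/n₂)) / (n₁ n₂) = (log x)^{α+β+3} / ((α+1)(β+1)(α+β+3)) + o((log x)^{α+β+3}) as x → ∞. -/
open Filter Finset Asymptotics Real MeasureTheory

/-!
Write `A_γ(y) = ∑_{n ≤ y} (log n)^γ / n`. Since `log min(x/n₁, x/n₂)` is the measure of the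
`u ∈ [0, log x]` with `n₁, n₂ ≤ e^u`, the double sum equals `∫_0^{log x} A_α(e^u) A_β(e^u) du`.
Comparing the sum with the integral of `(log t)^γ / t`, which is decreasing for `t ≥ e^γ`, gives
`A_γ(e^u) = u^{γ+1}/(γ+1) + O(1)` uniformly in `u ≥ 0`. Hence the integrand is
`u^{α+β+2}/((α+1)(β+1)) + O((log x)^{max(α,β)+1})`, and integrating produces the main term with
an error `O((log x)^{max(α,β)+2})`.
-/

lemma Real.log_min_s5 {y z : ℝ} (hy : 0 < y) (hz : 0 < z) : log (min y z) = min (log y) (log z) :=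
  (strictMonoOn_log.monotoneOn).map_min hy hz

lemma abs_mul_sub_mul_le {a b p q C D : ℝ} (ha : |a - p| ≤ C) (hb : |b - q| ≤ D) :
    |a * b - p * q| ≤ |p| * D + C * |q| + C * D := by
  have hC : 0 ≤ C := (abs_nonneg _).trans ha
  calc |a * b - p * q| = |p * (b - q) + (a - p) * q + (a - p) * (b - q)| := by ring_nf
    _ ≤ |p * (b - q)| + |(a - p) * q| + |(a - p) * (b - q)| := abs_add_three _ _ _
    _ ≤ |p| * D + C * |q| + C * D := by
      simp only [abs_mul]
      gcongr

lemma isLittleO_rpow_rpow_atTop {a b : ℝ} (hab : a < b) :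
    (fun x : ℝ => x ^ a) =o[atTop] fun x => x ^ b := by
  have h := (isBigO_refl (fun x : ℝ => x ^ b) atTop).mul_isLittleO
    ((isLittleO_one_iff ℝ).2 (tendsto_rpow_neg_atTop (sub_pos.2 hab)))
  refine h.congr' ?_ (.of_forall fun x => mul_one _)
  filter_upwards [eventually_gt_atTop 0] with x hx
  rw [← rpow_add hx]
  ring_nf

noncomputable def summatory (a : ℕ → ℝ) (y : ℝ) : ℝ := ∑ n ∈ Icc 1 ⌊y⌋₊, a n

lemma summatory_nonneg {a : ℕ → ℝ} (ha : ∀ n ≥ 1, 0 ≤ a n) (y : ℝ) : 0 ≤ summatory a y :=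
  sum_nonneg fun n hn => ha n (mem_Icc.1 hn).1

lemma summatory_mono {a : ℕ → ℝ} (ha : ∀ n ≥ 1, 0 ≤ a n) : Monotone (summatory a) :=
  fun _ _ hyz => sum_le_sum_of_subset_of_nonneg (Icc_subset_Icc le_rfl (Nat.floor_mono hyz))
    fun n hn _ => ha n (mem_Icc.1 hn).1

lemma AntitoneOn.integral_sub_sum_Ioc_floor_mem_Icc {f : ℝ → ℝ} {m : ℕ}
    (hf : AntitoneOn f (Set.Ici m)) (hf0 : ∀ t ≥ (m : ℝ), 0 ≤ f t) {y : ℝ} (hy : m ≤ y) :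
    (∫ t in (m : ℝ)..y, f t) - ∑ n ∈ Ioc m ⌊y⌋₊, f n ∈ Set.Icc 0 (f m) := by
  set N := ⌊y⌋₊
  have hmN : m ≤ N := Nat.le_floor hy
  have hmN' : (m : ℝ) ≤ N := by exact_mod_cast hmN
  have hNy : (N : ℝ) ≤ y := Nat.floor_le ((Nat.cast_nonneg m).trans hy)
  have hfmN : AntitoneOn f (Set.Icc m N) := hf.mono Set.Icc_subset_Ici_self
  have hint : IntervalIntegrable f volume m N := (Set.uIcc_of_le hmN' ▸ hfmN).intervalIntegrable
  have htail_int : IntervalIntegrable f volume N y :=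
    (hf.mono (by rw [Set.uIcc_of_le hNy]; exact fun t ht => hmN'.trans ht.1)).intervalIntegrable
  have hIoc : ∑ n ∈ Ioc m N, f n = ∑ i ∈ Ico m N, f ↑(i + 1) := by
    rw [← Ico_add_one_add_one_eq_Ioc, sum_Ico_add' (fun n : ℕ => f n)]
  have hIco : ∑ n ∈ Ico m N, f n + f N = f m + ∑ n ∈ Ioc m N, f n := by
    rw [sum_Ico_add_eq_sum_Icc hmN, add_sum_Ioc_eq_sum_Icc (f := fun n : ℕ => f n) hmN]
  have hsum_le := hfmN.sum_le_integral_Ico hmN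
  have hle_sum := hfmN.integral_le_sum_Ico hmN
  have hfN := hf0 N hmN'
  have htail : ∫ t in (N : ℝ)..y, f t ∈ Set.Icc 0 (f N) := by
    refine ⟨intervalIntegral.integral_nonneg hNy fun t ht => hf0 t (hmN'.trans ht.1), ?_⟩
    calc ∫ t in (N : ℝ)..y, f t ≤ ∫ _ in (N : ℝ)..y, f N :=
          intervalIntegral.integral_mono_on hNy htail_int intervalIntegrable_const
            fun t ht => hf hmN' (hmN'.trans ht.1) ht.1
      _ = (y - N) * f N := by rw [intervalIntegral.integral_const, smul_eq_mul]
      _ ≤ f N := mul_le_of_le_one_left hfN (by linarith [Nat.lt_floor_add_one y])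
  rw [← intervalIntegral.integral_add_adjacent_intervals hint htail_int]
  constructor <;> linarith [htail.1, htail.2]

lemma AntitoneOn.exists_abs_summatory_sub_integral_le {f : ℝ → ℝ} {m : ℕ} (hm : 1 ≤ m)
    (hf : AntitoneOn f (Set.Ici m)) (hf0 : ∀ t ≥ 1, 0 ≤ f t)
    (hfi : IntervalIntegrable f volume 1 m) :
    ∃ C, ∀ y ≥ 1, |summatory (fun n => f n) y - ∫ t in (1 : ℝ)..y, f t| ≤ C := by
  have hm' : (1 : ℝ) ≤ m := by exact_mod_cast hm
  have hpos (n : ℕ) (hn : 1 ≤ n) : 0 ≤ f n := hf0 n (by exact_mod_cast hn)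
  have hfm := hpos m hm
  have hA := summatory_nonneg (a := fun n => f n) hpos m
  have hI : 0 ≤ ∫ t in (1 : ℝ)..m, f t :=
    intervalIntegral.integral_nonneg hm' fun t ht => hf0 t ht.1
  refine ⟨summatory (fun n => f n) m + (∫ t in (1 : ℝ)..m, f t) + f m, fun y hy => ?_⟩
  rcases le_or_gt (m : ℝ) y with hmy | hym
  · obtain ⟨h0, h1⟩ :=
      hf.integral_sub_sum_Ioc_floor_mem_Icc (fun t ht => hf0 t (hm'.trans ht)) hmy
    have hIcc (k : ℕ) : Icc 1 k = Ioc 0 k := Icc_add_one_left_eq_Ioc 0 k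
    have hsum : summatory (fun n => f n) y =
        summatory (fun n => f n) m + ∑ n ∈ Ioc m ⌊y⌋₊, f n := by
      rw [summatory, summatory, Nat.floor_natCast, hIcc, hIcc,
        sum_Ioc_consecutive _ (Nat.zero_le m) (Nat.le_floor hmy)]
    have hint : IntervalIntegrable f volume m y :=
      (hf.mono (by rw [Set.uIcc_of_le hmy]; exact Set.Icc_subset_Ici_self)).intervalIntegrable
    rw [hsum, ← intervalIntegral.integral_add_adjacent_intervals hfi hint, abs_le]
    constructor <;> linarith
  · have hS := summatory_mono (a := fun n => f n) hpos hym.le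
    have hS0 := summatory_nonneg (a := fun n => f n) hpos y
    have hJ0 : 0 ≤ ∫ t in (1 : ℝ)..y, f t :=
      intervalIntegral.integral_nonneg hy fun t ht => hf0 t ht.1
    have hJ : ∫ t in (1 : ℝ)..y, f t ≤ ∫ t in (1 : ℝ)..m, f t :=
      intervalIntegral.integral_mono_interval le_rfl hy hym.le
        ((ae_restrict_mem measurableSet_Ioc).mono fun t ht => hf0 t ht.1.le) hfi
    rw [abs_le]
    constructor <;> linarith

lemma antitoneOn_log_rpow_div_self {γ : ℝ} (hγ : 0 ≤ γ) :
    AntitoneOn (fun t => log t ^ γ / t) (Set.Ici (exp γ)) := by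
  rcases hγ.eq_or_lt with rfl | hγ
  · intro s hs t _ hst
    simp only [rpow_zero]
    exact one_div_le_one_div_of_le ((exp_pos 0).trans_le hs) hst
  have hrw {t : ℝ} (ht : t ∈ Set.Ici (exp γ)) : log t ^ γ / t = (log t / t ^ γ⁻¹) ^ γ := by
    have ht0 : 0 < t := (exp_pos γ).trans_le ht
    have hlog : 0 ≤ log t := log_nonneg ((one_le_exp hγ.le).trans ht)
    rw [div_rpow hlog (rpow_nonneg ht0.le _), rpow_inv_rpow ht0.le hγ.ne']
  intro s hs t ht hst
  have hmem {u : ℝ} (hu : u ∈ Set.Ici (exp γ)) : u ∈ Set.Ici (exp γ⁻¹⁻¹) := by rwa [inv_inv]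
  have ht0 : 0 < t := (exp_pos γ).trans_le ht
  simp only [hrw hs, hrw ht]
  exact rpow_le_rpow (div_nonneg (log_nonneg ((one_le_exp hγ.le).trans ht)) (rpow_nonneg ht0.le _))
    (log_div_self_rpow_antitoneOn (inv_pos.2 hγ) (hmem hs) (hmem ht) hst) hγ.le

lemma integral_log_rpow_div_self {γ : ℝ} (hγ : 0 ≤ γ) {y : ℝ} (hy : 1 ≤ y) :
    ∫ t in (1 : ℝ)..y, log t ^ γ / t = log y ^ (γ + 1) / (γ + 1) := by
  have hpos {t : ℝ} (ht : t ∈ Set.uIcc 1 y) : 0 < t := by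
    rw [Set.uIcc_of_le hy] at ht; linarith [ht.1]
  have := intervalIntegral.integral_comp_mul_deriv (g := fun u => u ^ γ)
    (fun t ht => hasDerivAt_log (hpos ht).ne')
    (continuousOn_inv₀.mono fun t ht => (hpos ht).ne') (continuous_rpow_const hγ)
  simp only [Function.comp_def, log_one, ← div_eq_mul_inv] at this
  rw [this, integral_rpow (Or.inl (by linarith)), zero_rpow (by linarith), sub_zero]

lemma exists_abs_summatory_log_rpow_div_sub_le {γ : ℝ} (hγ : 0 ≤ γ) :
    ∃ C, ∀ u ≥ 0, |summatory (fun n => log n ^ γ / n) (exp u) - u ^ (γ + 1) / (γ + 1)| ≤ C := by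
  have hm : 1 ≤ ⌈exp γ⌉₊ := Nat.one_le_ceil_iff.2 (exp_pos γ)
  have hne : ∀ t ∈ Set.uIcc 1 (⌈exp γ⌉₊ : ℝ), t ≠ 0 := by
    intro t ht
    rw [Set.uIcc_of_le (by exact_mod_cast hm)] at ht
    linarith [ht.1]
  obtain ⟨C, hC⟩ := AntitoneOn.exists_abs_summatory_sub_integral_le hm
    ((antitoneOn_log_rpow_div_self hγ).mono (Set.Ici_subset_Ici.2 (Nat.le_ceil _)))
    (fun t ht => div_nonneg (rpow_nonneg (log_nonneg ht) _) (by linarith))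
    (((continuousOn_log.mono hne).rpow_const fun _ _ => Or.inr hγ).div continuousOn_id
      hne).intervalIntegrable
  refine ⟨C, fun u hu => ?_⟩
  have := hC (exp u) (one_le_exp hu)
  rwa [integral_log_rpow_div_self hγ (one_le_exp hu), log_exp] at this

lemma summatory_eq_sum_indicator (a : ℕ → ℝ) {x y : ℝ} (hy : 0 ≤ y) (hyx : y ≤ x) :
    summatory a y = ∑ n ∈ Icc 1 ⌊x⌋₊, {z : ℝ | (n : ℝ) ≤ z}.indicator (fun _ => a n) y := by
  simp only [Set.indicator_apply, Set.mem_ofPred_eq, ← sum_filter, summatory]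
  congr 1
  ext n
  simp only [mem_Icc, mem_filter, Nat.le_floor_iff hy]
  constructor
  · rintro ⟨h1, hny⟩
    exact ⟨⟨h1, Nat.le_floor (hny.trans hyx)⟩, hny⟩
  · rintro ⟨⟨h1, -⟩, hny⟩
    exact ⟨h1, hny⟩

lemma natCast_le_exp_sub_iff {x t : ℝ} (hx : 0 < x) {n : ℕ} (hn : 1 ≤ n) :
    (n : ℝ) ≤ exp (log x - t) ↔ t ≤ log (x / n) := by
  have hn0 : (0 : ℝ) < n := by exact_mod_cast hn
  rw [← log_le_iff_le_exp hn0, log_div hx.ne' hn0.ne']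
  constructor <;> intro <;> linarith

lemma log_div_natCast_mem_Icc {x : ℝ} {n : ℕ} (hn : n ∈ Icc 1 ⌊x⌋₊) :
    log (x / n) ∈ Set.Icc 0 (log x) := by
  obtain ⟨h1, hx⟩ := mem_Icc.1 hn
  have hn1 : (1 : ℝ) ≤ n := by exact_mod_cast h1
  have hnx : (n : ℝ) ≤ x := (Nat.le_floor_iff' (by omega)).1 hx
  rw [log_div (by linarith) (by linarith)]
  exact ⟨by linarith [log_le_log (by linarith) hnx], by linarith [log_nonneg hn1]⟩

theorem sum_mul_log_min_eq_integral (a b : ℕ → ℝ) {x : ℝ} (hx : 1 ≤ x) :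
    ∑ n₁ ∈ Icc 1 ⌊x⌋₊, ∑ n₂ ∈ Icc 1 ⌊x⌋₊, a n₁ * b n₂ * log (min (x / n₁) (x / n₂)) =
      ∫ u in 0..log x, summatory a (exp u) * summatory b (exp u) := by
  have hx0 : 0 < x := by linarith
  -- In the variable `t = log x - u`, the condition `n ≤ e^u` reads `t ≤ log (x / n)`.
  have layer : ∀ t ∈ Set.uIcc 0 (log x),
      summatory a (exp (log x - t)) * summatory b (exp (log x - t)) =
        ∑ n₁ ∈ Icc 1 ⌊x⌋₊, ∑ n₂ ∈ Icc 1 ⌊x⌋₊,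
          {s | s ≤ min (log (x / n₁)) (log (x / n₂))}.indicator (fun _ => a n₁ * b n₂) t := by
    intro t ht
    rw [Set.uIcc_of_le (log_nonneg hx)] at ht
    have hle : exp (log x - t) ≤ x :=
      (exp_le_exp.2 (by linarith [ht.1])).trans_eq (exp_log hx0)
    rw [summatory_eq_sum_indicator a (exp_pos _).le hle,
      summatory_eq_sum_indicator b (exp_pos _).le hle, sum_mul_sum]
    refine sum_congr rfl fun n₁ hn₁ => sum_congr rfl fun n₂ hn₂ => ?_
    simp only [Set.indicator_apply, Set.mem_ofPred_eq, le_min_iff, ite_zero_mul_ite_zero,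
      natCast_le_exp_sub_iff hx0 (mem_Icc.1 hn₁).1, natCast_le_exp_sub_iff hx0 (mem_Icc.1 hn₂).1]
  have hint (c k : ℝ) :
      IntervalIntegrable ({s : ℝ | s ≤ c}.indicator fun _ => k) volume 0 (log x) :=
    intervalIntegrable_iff.2 (intervalIntegrable_const.def'.indicator measurableSet_Iic)
  have hreflect := intervalIntegral.integral_comp_sub_left
    (fun u => summatory a (exp u) * summatory b (exp u)) (log x) (a := 0) (b := log x)
  rw [sub_self, sub_zero] at hreflect
  rw [← hreflect, intervalIntegral.integral_congr layer, intervalIntegral.integral_finsetSum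
    fun n₁ _ => by simpa only [Finset.sum_fn] using (IntervalIntegrable.sum (Icc 1 ⌊x⌋₊)
      fun n₂ _ => hint (min (log (x / n₁)) (log (x / n₂))) (a n₁ * b n₂))]
  refine sum_congr rfl fun n₁ hn₁ => ?_
  rw [intervalIntegral.integral_finsetSum fun _ _ => hint _ _]
  refine sum_congr rfl fun n₂ hn₂ => ?_
  have h₁ := log_div_natCast_mem_Icc hn₁
  have h₂ := log_div_natCast_mem_Icc hn₂
  rw [intervalIntegral.integral_indicator ⟨le_min h₁.1 h₂.1, min_le_of_left_le h₁.2⟩,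
    intervalIntegral.integral_const, log_min_s5 (div_pos hx0 (Nat.cast_pos.2 (mem_Icc.1 hn₁).1))
      (div_pos hx0 (Nat.cast_pos.2 (mem_Icc.1 hn₂).1)), sub_zero, smul_eq_mul, mul_comm]

lemma exists_abs_summatory_mul_sub_le {α β : ℝ} (hα : 0 ≤ α) (hβ : 0 ≤ β) :
    ∃ K, ∀ L ≥ 1, ∀ u ∈ Set.Icc 0 L,
      |summatory (fun n => log n ^ α / n) (exp u) * summatory (fun n => log n ^ β / n) (exp u) -
        u ^ (α + β + 2) / ((α + 1) * (β + 1))| ≤ K * L ^ (max α β + 1) := by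
  obtain ⟨Cα, hCα⟩ := exists_abs_summatory_log_rpow_div_sub_le hα
  obtain ⟨Cβ, hCβ⟩ := exists_abs_summatory_log_rpow_div_sub_le hβ
  have hCα0 : 0 ≤ Cα := (abs_nonneg _).trans (hCα 0 le_rfl)
  have hCβ0 : 0 ≤ Cβ := (abs_nonneg _).trans (hCβ 0 le_rfl)
  refine ⟨Cβ + Cα + Cα * Cβ, fun L hL u hu => ?_⟩
  have hmain {γ : ℝ} (hγ : 0 ≤ γ) (hγM : γ ≤ max α β) :
      |u ^ (γ + 1) / (γ + 1)| ≤ L ^ (max α β + 1) := by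
    rw [abs_of_nonneg (by have := rpow_nonneg hu.1 (γ + 1); positivity)]
    calc u ^ (γ + 1) / (γ + 1) ≤ u ^ (γ + 1) :=
          div_le_self (rpow_nonneg hu.1 _) (by linarith)
      _ ≤ L ^ (γ + 1) := rpow_le_rpow hu.1 hu.2 (by linarith)
      _ ≤ L ^ (max α β + 1) := rpow_le_rpow_of_exponent_le hL (by linarith)
  have hprod : u ^ (α + 1) / (α + 1) * (u ^ (β + 1) / (β + 1)) =
      u ^ (α + β + 2) / ((α + 1) * (β + 1)) := by
    rw [div_mul_div_comm, ← rpow_add' hu.1 (by linarith)]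
    ring_nf
  have h1 : 1 ≤ L ^ (max α β + 1) := one_le_rpow hL (by positivity)
  rw [← hprod]
  calc _ ≤ _ := abs_mul_sub_mul_le (hCα u hu.1) (hCβ u hu.1)
    _ ≤ L ^ (max α β + 1) * Cβ + Cα * L ^ (max α β + 1) + Cα * Cβ * L ^ (max α β + 1) := by
      gcongr ?_ * _ + _ * ?_ + ?_
      · exact hmain hα (le_max_left α β)
      · exact hmain hβ (le_max_right α β)
      · exact le_mul_of_one_le_right (by positivity) h1
    _ = _ := by ring

theorem isLittleO_integral_summatory_mul_sub {α β : ℝ} (hα : 0 ≤ α) (hβ : 0 ≤ β) :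
    (fun L => (∫ u in 0..L, summatory (fun n => log n ^ α / n) (exp u) *
        summatory (fun n => log n ^ β / n) (exp u)) -
      L ^ (α + β + 3) / ((α + 1) * (β + 1) * (α + β + 3))) =o[atTop]
      fun L => L ^ (α + β + 3) := by
  obtain ⟨K, hK⟩ := exists_abs_summatory_mul_sub_le hα hβ
  have hcoef (γ : ℝ) (n : ℕ) (_ : 1 ≤ n) : 0 ≤ log n ^ γ / n :=
    div_nonneg (rpow_nonneg (log_natCast_nonneg n) _) n.cast_nonneg
  have hmono : Monotone fun u => summatory (fun n => log n ^ α / n) (exp u) *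
      summatory (fun n => log n ^ β / n) (exp u) :=
    ((summatory_mono (hcoef α)).comp exp_monotone).mul
      ((summatory_mono (hcoef β)).comp exp_monotone)
      (fun _ => summatory_nonneg (hcoef α) _) (fun _ => summatory_nonneg (hcoef β) _)
  have hmain (L : ℝ) : ∫ u in 0..L, u ^ (α + β + 2) / ((α + 1) * (β + 1)) =
      L ^ (α + β + 3) / ((α + 1) * (β + 1) * (α + β + 3)) := by
    rw [intervalIntegral.integral_div, integral_rpow (Or.inl (by linarith)),
      zero_rpow (by linarith), sub_zero, show α + β + 2 + 1 = α + β + 3 by ring, div_div,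
      mul_comm (α + β + 3)]
  have hbound : ∀ᶠ L in atTop, ‖(∫ u in 0..L, summatory (fun n => log n ^ α / n) (exp u) *
        summatory (fun n => log n ^ β / n) (exp u)) -
      L ^ (α + β + 3) / ((α + 1) * (β + 1) * (α + β + 3))‖ ≤ K * ‖L ^ (max α β + 2)‖ := by
    filter_upwards [eventually_ge_atTop 1] with L hL
    rw [← hmain, ← intervalIntegral.integral_sub hmono.intervalIntegrable
      ((intervalIntegral.intervalIntegrable_rpow' (by linarith)).div_const _),
      norm_of_nonneg (rpow_nonneg (by linarith) _)]
    calc _ ≤ K * L ^ (max α β + 1) * |L - 0| :=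
          intervalIntegral.norm_integral_le_of_norm_le_const fun u hu =>
            hK L hL u (Set.Ioc_subset_Icc_self (Set.uIoc_of_le (zero_le_one.trans hL) ▸ hu))
      _ = K * L ^ (max α β + 2) := by
        rw [sub_zero, abs_of_nonneg (by linarith), show max α β + 2 = max α β + 1 + 1 by ring,
          rpow_add_one (by linarith) (max α β + 1), mul_assoc]
  have hlt : max α β + 2 < α + β + 3 := by
    have := max_lt (show α < α + β + 1 by linarith) (show β < α + β + 1 by linarith)
    linarith
  exact (IsBigO.of_bound K hbound).trans_isLittleO (isLittleO_rpow_rpow_atTop hlt)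

theorem stmt_5 (α β : ℝ) (hα : 0 ≤ α) (hβ : 0 ≤ β) :
    (fun x : ℝ =>
      (∑ n₁ ∈ Finset.Icc 1 ⌊x⌋₊, ∑ n₂ ∈ Finset.Icc 1 ⌊x⌋₊,
        (Real.log n₁) ^ α * (Real.log n₂) ^ β *
          Real.log (min (x / n₁) (x / n₂)) / (n₁ * n₂))
      - (Real.log x) ^ (α + β + 3) / ((α + 1) * (β + 1) * (α + β + 3)))
    =o[atTop] (fun x : ℝ => (Real.log x) ^ (α + β + 3)) := by
  refine ((isLittleO_integral_summatory_mul_sub hα hβ).comp_tendsto tendsto_log_atTop).congr'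
    ?_ EventuallyEq.rfl
  filter_upwards [eventually_ge_atTop 1] with x hx
  rw [Function.comp_apply, ← sum_mul_log_min_eq_integral _ _ hx]
  congr 1
  exact sum_congr rfl fun n₁ _ => sum_congr rfl fun n₂ _ => by ring
end

section
/- Let a : ℕ × ℕ → ℂ and M(x,y) = Σ_{n₁ ≤ x, n₂ ≤ y} a(n₁,n₂). Then Σ_{n₁ ≤ x, n₂ ≤ y} a(n₁,n₂)/(n₁ n₂) = Σ_{n₁ ≤ x, n₂ ≤ y} M(n₁,n₂)/(n₁(n₁+1)n₂(n₂+1)) + Σ_{n₁ ≤ x} M(n₁,y)/(n₁(n₁+1)(⌊y⌋+1)) + Σ_{n₂ ≤ y} M(x,n₂)/(n₂(n₂+1)(⌊x⌋+1)) + M(x,y)/((⌊x⌋+1)(⌊y⌋+1)). -/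
/-!
One-variable partial summation against `1/n = ∑_{n ≤ m ≤ N} 1/(m(m+1)) + 1/(N+1)` is applied first
in `n₁` and then, inside each partial sum over `n₁`, in `n₂`; the boundary terms `1/(N+1)` of the two
summations produce the three correction terms.
-/

open Finset

section PartialSummation

variable {K : Type*} [Field K] [CharZero K]

theorem sum_Icc_div_natCast_by_parts (b : ℕ → K) (N : ℕ) :
    ∑ n ∈ Icc 1 N, b n / n
      = ∑ m ∈ Icc 1 N, (∑ n ∈ Icc 1 m, b n) / (m * (m + 1))
        + (∑ n ∈ Icc 1 N, b n) / (N + 1) := by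
  induction N with
  | zero => simp
  | succ N ih =>
    rw [sum_Icc_succ_top (by omega), ih, sum_Icc_succ_top (by omega),
      sum_Icc_succ_top (by omega)]
    have hN : (N : K) + 1 ≠ 0 := Nat.cast_add_one_ne_zero N
    have hN' : (N : K) + 1 + 1 ≠ 0 := by
      simpa using Nat.cast_add_one_ne_zero (R := K) (N + 1)
    push_cast
    field_simp
    ring

def rectSum (a : ℕ → ℕ → K) (p q : ℕ) : K :=
  ∑ n₁ ∈ Icc 1 p, ∑ n₂ ∈ Icc 1 q, a n₁ n₂

theorem sum_Icc_sum_Icc_div_natCast_by_parts (a : ℕ → ℕ → K) (p Y : ℕ) :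
    ∑ n₁ ∈ Icc 1 p, ∑ n₂ ∈ Icc 1 Y, a n₁ n₂ / n₂
      = ∑ m₂ ∈ Icc 1 Y, rectSum a p m₂ / (m₂ * (m₂ + 1)) + rectSum a p Y / (Y + 1) := by
  simp only [rectSum, sum_comm (s := Icc 1 p), ← sum_div]
  exact sum_Icc_div_natCast_by_parts _ Y

theorem sum_Icc_sum_Icc_div_natCast_mul_by_parts (a : ℕ → ℕ → K) (X Y : ℕ) :
    ∑ n₁ ∈ Icc 1 X, ∑ n₂ ∈ Icc 1 Y, a n₁ n₂ / (n₁ * n₂)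
      = ∑ m₁ ∈ Icc 1 X, ∑ m₂ ∈ Icc 1 Y,
          rectSum a m₁ m₂ / (m₁ * (m₁ + 1) * m₂ * (m₂ + 1))
        + ∑ m₁ ∈ Icc 1 X, rectSum a m₁ Y / (m₁ * (m₁ + 1) * (Y + 1))
        + ∑ m₂ ∈ Icc 1 Y, rectSum a X m₂ / (m₂ * (m₂ + 1) * (X + 1))
        + rectSum a X Y / ((X + 1) * (Y + 1)) := by
  have hsplit : ∑ n₁ ∈ Icc 1 X, ∑ n₂ ∈ Icc 1 Y, a n₁ n₂ / (n₁ * n₂)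
      = ∑ n₁ ∈ Icc 1 X, (∑ n₂ ∈ Icc 1 Y, a n₁ n₂ / n₂) / n₁ := by
    simp only [sum_div, div_div, mul_comm]
  rw [hsplit, sum_Icc_div_natCast_by_parts]
  simp only [sum_Icc_sum_Icc_div_natCast_by_parts, add_div, sum_div, div_div, sum_add_distrib]
  simp only [mul_comm, mul_left_comm, add_assoc]

end PartialSummation

theorem stmt_6_general (a : ℕ → ℕ → ℂ) (x y : ℝ)
    (M : ℝ → ℝ → ℂ)
    (hM : ∀ u v : ℝ, M u v = ∑ n₁ ∈ Finset.Icc 1 ⌊u⌋₊, ∑ n₂ ∈ Finset.Icc 1 ⌊v⌋₊, a n₁ n₂) :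
    ∑ n₁ ∈ Finset.Icc 1 ⌊x⌋₊, ∑ n₂ ∈ Finset.Icc 1 ⌊y⌋₊, a n₁ n₂ / ((n₁ : ℂ) * n₂)
    = (∑ n₁ ∈ Finset.Icc 1 ⌊x⌋₊, ∑ n₂ ∈ Finset.Icc 1 ⌊y⌋₊,
        M n₁ n₂ / ((n₁ : ℂ) * (n₁ + 1) * n₂ * (n₂ + 1)))
      + (∑ n₁ ∈ Finset.Icc 1 ⌊x⌋₊,
          M n₁ y / ((n₁ : ℂ) * (n₁ + 1) * ((⌊y⌋₊ : ℂ) + 1)))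
      + (∑ n₂ ∈ Finset.Icc 1 ⌊y⌋₊,
          M x n₂ / ((n₂ : ℂ) * (n₂ + 1) * ((⌊x⌋₊ : ℂ) + 1)))
      + M x y / (((⌊x⌋₊ : ℂ) + 1) * ((⌊y⌋₊ : ℂ) + 1)) := by
  simp only [hM, Nat.floor_natCast]
  exact sum_Icc_sum_Icc_div_natCast_mul_by_parts a ⌊x⌋₊ ⌊y⌋₊

theorem stmt_6 (a : ℕ → ℕ → ℂ) (x y : ℝ) (hx : 1 ≤ x) (hy : 1 ≤ y)
    (M : ℝ → ℝ → ℂ)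
    (hM : ∀ u v : ℝ, M u v = ∑ n₁ ∈ Finset.Icc 1 ⌊u⌋₊, ∑ n₂ ∈ Finset.Icc 1 ⌊v⌋₊, a n₁ n₂) :
    ∑ n₁ ∈ Finset.Icc 1 ⌊x⌋₊, ∑ n₂ ∈ Finset.Icc 1 ⌊y⌋₊, a n₁ n₂ / ((n₁ : ℂ) * n₂)
    = (∑ n₁ ∈ Finset.Icc 1 ⌊x⌋₊, ∑ n₂ ∈ Finset.Icc 1 ⌊y⌋₊,
        M n₁ n₂ / ((n₁ : ℂ) * (n₁ + 1) * n₂ * (n₂ + 1)))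
      + (∑ n₁ ∈ Finset.Icc 1 ⌊x⌋₊,
          M n₁ y / ((n₁ : ℂ) * (n₁ + 1) * ((⌊y⌋₊ : ℂ) + 1)))
      + (∑ n₂ ∈ Finset.Icc 1 ⌊y⌋₊,
          M x n₂ / ((n₂ : ℂ) * (n₂ + 1) * ((⌊x⌋₊ : ℂ) + 1)))
      + M x y / (((⌊x⌋₊ : ℂ) + 1) * ((⌊y⌋₊ : ℂ) + 1)) :=
  stmt_6_general a x y M hM
end

section
/- For every positive integer k and prime p, the Dirichlet inverse μ_k of the k-fold two-variable convolution τ_k = 1^{*k} satisfies μ_k(p^{ν₁}, p^{ν₂}) = (−1)^{ν₁+ν₂} C(k,ν₁) C(k,ν₂) if ν₁, ν₂ ≤ k, and 0 otherwise, where C(k,ν) is a binomial coefficient. -/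
/-!
Restricted to pairs of powers of a prime `p`, two-variable Dirichlet convolution becomes
multiplication of Bell series `∑ f (p ^ a) (p ^ b) X ^ a Y ^ b`. The constant function `1` has
Bell series `(1 - X)⁻¹ (1 - Y)⁻¹`, so `τ_k` has `(1 - X)⁻ᵏ (1 - Y)⁻ᵏ`, and its inverse `μ_k`
must have Bell series `(1 - X)ᵏ (1 - Y)ᵏ`, whose coefficients are the signed binomials.
-/

open Finset

/-- Two-variable Dirichlet convolution. -/
noncomputable def dconv (f g : ℕ → ℕ → ℂ) : ℕ → ℕ → ℂ := fun n₁ n₂ =>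
  ∑ d₁ ∈ n₁.divisors, ∑ d₂ ∈ n₂.divisors, f d₁ d₂ * g (n₁ / d₁) (n₂ / d₂)

/-- The identity for two-variable Dirichlet convolution. -/
noncomputable def ddelta : ℕ → ℕ → ℂ := fun n₁ n₂ => if n₁ = 1 ∧ n₂ = 1 then 1 else 0

/-- `dtau k` is the `k`-fold convolution of the constant-one function (`dtau 1 = 1`). -/
noncomputable def dtau : ℕ → ℕ → ℕ → ℂ
  | 0 => ddelta
  | k + 1 => dconv (fun _ _ => 1) (dtau k)

open PowerSeries

theorem PowerSeries.coeff_one_sub_X_pow {R : Type*} [CommRing R] (k n : ℕ) :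
    coeff n ((1 - X : R⟦X⟧) ^ k) = (-1) ^ n * k.choose n := by
  have h : (1 - X : R⟦X⟧) ^ k =
      rescale (-1) (((1 + Polynomial.X) ^ k : Polynomial R) : R⟦X⟧) := by
    simp [sub_eq_add_neg]
  rw [h, coeff_rescale, Polynomial.coeff_coe, Polynomial.coeff_one_add_X_pow]

theorem Nat.sum_divisors_prime_pow_eq_sum_antidiagonal {M : Type*} [AddCommMonoid M] {p : ℕ}
    (hp : p.Prime) (a : ℕ) (f : ℕ → ℕ → M) :
    ∑ d ∈ (p ^ a).divisors, f d (p ^ a / d) = ∑ x ∈ antidiagonal a, f (p ^ x.1) (p ^ x.2) := by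
  rw [Nat.sum_antidiagonal_eq_sum_range_succ (fun i j => f (p ^ i) (p ^ j)),
    Nat.divisors_prime_pow hp, sum_map]
  refine sum_congr rfl fun i hi => ?_
  rw [Function.Embedding.coeFn_mk, Nat.pow_div (Nat.lt_succ_iff.mp (mem_range.mp hi)) hp.pos]

/-- `∑ f (p ^ a) (p ^ b) X ^ a Y ^ b`, with `X` the outer and `Y` the inner variable. -/
noncomputable def bellSeries₂ (p : ℕ) (f : ℕ → ℕ → ℂ) : ℂ⟦X⟧⟦X⟧ :=
  mk fun a => mk fun b => f (p ^ a) (p ^ b)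

@[simp]
theorem coeff_coeff_bellSeries₂ (p : ℕ) (f : ℕ → ℕ → ℂ) (a b : ℕ) :
    coeff b (coeff a (bellSeries₂ p f)) = f (p ^ a) (p ^ b) := by
  simp [bellSeries₂]

theorem dconv_prime_pow {p : ℕ} (hp : p.Prime) (f g : ℕ → ℕ → ℂ) (a b : ℕ) :
    dconv f g (p ^ a) (p ^ b) = ∑ x ∈ antidiagonal a, ∑ y ∈ antidiagonal b,
      f (p ^ x.1) (p ^ y.1) * g (p ^ x.2) (p ^ y.2) := by
  rw [dconv, Nat.sum_divisors_prime_pow_eq_sum_antidiagonal hp a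
    (fun d₁ q₁ => ∑ d₂ ∈ (p ^ b).divisors, f d₁ d₂ * g q₁ (p ^ b / d₂))]
  refine sum_congr rfl fun x _ => ?_
  exact Nat.sum_divisors_prime_pow_eq_sum_antidiagonal hp b
    (fun d₂ q₂ => f (p ^ x.1) d₂ * g (p ^ x.2) q₂)

theorem bellSeries₂_dconv {p : ℕ} (hp : p.Prime) (f g : ℕ → ℕ → ℂ) :
    bellSeries₂ p (dconv f g) = bellSeries₂ p f * bellSeries₂ p g := by
  ext a b
  rw [coeff_coeff_bellSeries₂, dconv_prime_pow hp, coeff_mul, map_sum]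
  refine sum_congr rfl fun x _ => ?_
  simp only [coeff_mul, coeff_coeff_bellSeries₂]

theorem bellSeries₂_ddelta {p : ℕ} (hp : p.Prime) : bellSeries₂ p ddelta = 1 := by
  ext a b
  simp only [coeff_coeff_bellSeries₂, ddelta, Nat.pow_eq_one, hp.ne_one, false_or, coeff_one]
  split_ifs <;> simp_all

theorem bellSeries₂_one (p : ℕ) :
    bellSeries₂ p (fun _ _ => 1) = C (PowerSeries.mk 1) * map C (PowerSeries.mk 1) := by
  ext a b
  simp

theorem bellSeries₂_dtau {p : ℕ} (hp : p.Prime) (k : ℕ) :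
    bellSeries₂ p (dtau k) = (C (PowerSeries.mk 1) * map C (PowerSeries.mk 1)) ^ k := by
  induction k with
  | zero => exact bellSeries₂_ddelta hp
  | succ k ih => rw [dtau, bellSeries₂_dconv hp, ih, bellSeries₂_one, pow_succ']

theorem bellSeries₂_dtau_mul {p : ℕ} (hp : p.Prime) (k : ℕ) :
    bellSeries₂ p (dtau k) * (C ((1 - X) ^ k) * map C ((1 - X) ^ k)) = 1 := by
  rw [bellSeries₂_dtau hp, map_pow, map_pow, ← mul_pow, ← mul_pow, mul_mul_mul_comm,
    ← map_mul, ← map_mul, mk_one_mul_one_sub_eq_one, map_one, map_one, one_mul, one_pow]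

theorem bellSeries₂_eq_of_dconv_dtau_eq_ddelta {p : ℕ} (hp : p.Prime) {k : ℕ}
    {μk : ℕ → ℕ → ℂ} (hμ : dconv μk (dtau k) = ddelta) :
    bellSeries₂ p μk = C ((1 - X) ^ k) * map C ((1 - X) ^ k) := by
  refine left_inv_eq_right_inv ?_ (bellSeries₂_dtau_mul hp k)
  rw [← bellSeries₂_dconv hp, hμ, bellSeries₂_ddelta hp]

theorem stmt_12_general (k : ℕ) (μk : ℕ → ℕ → ℂ)
    (hμ : dconv μk (dtau k) = ddelta) (p : ℕ) (hp : p.Prime) (ν₁ ν₂ : ℕ) :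
    μk (p ^ ν₁) (p ^ ν₂) =
      if ν₁ ≤ k ∧ ν₂ ≤ k then
        (-1) ^ (ν₁ + ν₂) * (Nat.choose k ν₁ : ℂ) * (Nat.choose k ν₂ : ℂ)
      else 0 := by
  have h := congrArg (fun F => coeff ν₂ (coeff ν₁ F))
    (bellSeries₂_eq_of_dconv_dtau_eq_ddelta hp hμ)
  simp only [coeff_coeff_bellSeries₂, coeff_C_mul, coeff_map, coeff_mul_C,
    coeff_one_sub_X_pow] at h
  rw [h]
  split_ifs with hν
  · ring
  · rcases not_and_or.mp hν with hlt | hlt <;> simp [Nat.choose_eq_zero_of_lt (not_le.mp hlt)]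

theorem stmt_12 (k : ℕ) (hk : 1 ≤ k) (μk : ℕ → ℕ → ℂ)
    (hμ : dconv μk (dtau k) = ddelta) (p : ℕ) (hp : p.Prime) (ν₁ ν₂ : ℕ) :
    μk (p ^ ν₁) (p ^ ν₂) =
      if ν₁ ≤ k ∧ ν₂ ≤ k then
        (-1) ^ (ν₁ + ν₂) * (Nat.choose k ν₁ : ℂ) * (Nat.choose k ν₂ : ℂ)
      else 0 :=
  stmt_12_general k μk hμ p hp ν₁ ν₂
end

section
/- For every prime p, Σ_{b₁, b₂ = 0}^∞ μ̃(p^{b₁}, p^{b₂}) / p^{b₁+b₂} = (1 − 1/p)³ / (1 − 1/p²), where μ̃ is the Dirichlet inverse of the two-variable gcd function. -/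
open Finset

open PowerSeries

/-!
At powers of `p`, two-variable Dirichlet convolution is multiplication of double power series,
the local series of `f` having coefficient `f (p^a) (p^b)` at `x^a y^b`. The local series of
`gcd`, with coefficients `p^(min a b)`, is `(1 - xy) / ((1 - x)(1 - y)(1 - pxy))`, so the local
series of `μ̃` is `(1 - x)(1 - y)(1 - pxy) · ∑ (xy)^k`. The geometric series converges at
`x = y = 1/p`, and multiplying by `x` or `y` only shifts the summation index, so the sum is the
value `(1 - 1/p)^3 / (1 - 1/p^2)` of the rational function.
-/

section TwoVariableSeries

variable {R : Type*} [CommRing R]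

/- A double power series is an element of `R⟦X⟧⟦X⟧`: `coeff b (coeff a F)` is its coefficient
of `x^a y^b`, where `x = X` is the outer and `y = C X` the inner variable. -/

theorem coeff_coeff_mul_X_zero (F : R⟦X⟧⟦X⟧) (b : ℕ) : coeff b (coeff 0 (F * X)) = 0 := by
  simp

theorem coeff_coeff_mul_X_succ (F : R⟦X⟧⟦X⟧) (a b : ℕ) :
    coeff b (coeff (a + 1) (F * X)) = coeff b (coeff a F) := by
  rw [coeff_succ_mul_X]

theorem coeff_coeff_mul_C_X_zero (F : R⟦X⟧⟦X⟧) (a : ℕ) : coeff 0 (coeff a (F * C X)) = 0 := by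
  simp [coeff_mul_C]

theorem coeff_coeff_mul_C_X_succ (F : R⟦X⟧⟦X⟧) (a b : ℕ) :
    coeff (b + 1) (coeff a (F * C X)) = coeff b (coeff a F) := by
  rw [coeff_mul_C, coeff_succ_mul_X]

theorem rescale_X_mk_one_mul : rescale (X : R⟦X⟧) (PowerSeries.mk 1) * (1 - X * C X) = 1 := by
  rw [mul_comm X, ← rescale_X, ← map_one (rescale (X : R⟦X⟧)), ← map_sub, ← map_mul,
    mk_one_mul_one_sub_eq_one, map_one]

variable [TopologicalSpace R] [IsTopologicalRing R]

def HasEvalSum (x y : R) (F : R⟦X⟧⟦X⟧) (s : R) : Prop :=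
  HasSum (fun n : ℕ × ℕ => coeff n.2 (coeff n.1 F) * x ^ n.1 * y ^ n.2) s

variable {x y s t : R} {F G : R⟦X⟧⟦X⟧}

theorem HasEvalSum.sub (hF : HasEvalSum x y F s) (hG : HasEvalSum x y G t) :
    HasEvalSum x y (F - G) (s - t) :=
  (HasSum.sub hF hG).congr_fun fun n => by simp [sub_mul]

theorem HasEvalSum.C_C_mul (c : R) (hF : HasEvalSum x y F s) :
    HasEvalSum x y (C (C c) * F) (c * s) :=
  (HasSum.mul_left c hF).congr_fun fun n => by simp [coeff_C_mul, mul_assoc]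

theorem HasEvalSum.mul_X (hF : HasEvalSum x y F s) : HasEvalSum x y (F * X) (x * s) := by
  have he : Function.Injective fun n : ℕ × ℕ => (n.1 + 1, n.2) := fun m n h => by
    simpa [Prod.ext_iff] using h
  refine (he.hasSum_iff fun n hn => ?_).mp ?_
  · obtain ⟨a, b⟩ := n
    obtain _ | a := a
    · simp
    · exact absurd ⟨(a, b), rfl⟩ hn
  · refine (HasSum.mul_left x hF).congr_fun fun n => ?_
    simp only [Function.comp_apply, coeff_coeff_mul_X_succ]
    ring

theorem HasEvalSum.mul_C_X (hF : HasEvalSum x y F s) : HasEvalSum x y (F * C X) (y * s) := by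
  have he : Function.Injective fun n : ℕ × ℕ => (n.1, n.2 + 1) := fun m n h => by
    simpa [Prod.ext_iff] using h
  refine (he.hasSum_iff fun n hn => ?_).mp ?_
  · obtain ⟨a, b⟩ := n
    obtain _ | b := b
    · simp [coeff_mul_C]
    · exact absurd ⟨(a, b), rfl⟩ hn
  · refine (HasSum.mul_left y hF).congr_fun fun n => ?_
    simp only [Function.comp_apply, coeff_coeff_mul_C_X_succ]
    ring

end TwoVariableSeries

section NormedField

variable {K : Type*} [NormedField K] {x y : K}

theorem hasEvalSum_rescale_X_mk_one (h : ‖x * y‖ < 1) :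
    HasEvalSum x y (rescale (X : K⟦X⟧) (PowerSeries.mk 1)) (1 - x * y)⁻¹ := by
  have he : Function.Injective fun k : ℕ => (k, k) := fun m n h => by
    simpa [Prod.ext_iff] using h
  refine (he.hasSum_iff fun n hn => ?_).mp ?_
  · obtain ⟨a, b⟩ := n
    have hab : b ≠ a := fun h => hn ⟨a, by rw [h]⟩
    simp [coeff_rescale, coeff_X_pow, hab]
  · simpa [Function.comp_def, coeff_rescale, mul_pow] using hasSum_geometric_of_norm_lt_one h

theorem hasEvalSum_rescale_X_mk_one_mul (h : ‖x * y‖ < 1) (c : K) :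
    HasEvalSum x y
      (rescale X (PowerSeries.mk 1) * ((1 - X) * (1 - C X) * (1 - C (C c) * X * C X)))
      ((1 - x) * (1 - y) * (1 - c * x * y) / (1 - x * y)) := by
  have h₀ := hasEvalSum_rescale_X_mk_one h
  have h₁ := h₀.sub h₀.mul_X
  have h₂ := h₁.sub h₁.mul_C_X
  convert h₂.sub (h₂.mul_X.mul_C_X.C_C_mul c) using 1 <;> ring

end NormedField

noncomputable def localSeries (p : ℕ) (f : ℕ → ℕ → ℂ) : ℂ⟦X⟧⟦X⟧ :=
  PowerSeries.mk fun a => PowerSeries.mk fun b => f (p ^ a) (p ^ b)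

@[simp]
theorem coeff_coeff_localSeries (p : ℕ) (f : ℕ → ℕ → ℂ) (a b : ℕ) :
    coeff b (coeff a (localSeries p f)) = f (p ^ a) (p ^ b) := by
  simp [localSeries]

theorem localSeries_dconv {p : ℕ} (hp : p.Prime) (f g : ℕ → ℕ → ℂ) :
    localSeries p (dconv f g) = localSeries p f * localSeries p g := by
  refine PowerSeries.ext fun a => PowerSeries.ext fun b => ?_
  simp only [coeff_coeff_localSeries, dconv, coeff_mul, map_sum,
    Finset.Nat.sum_antidiagonal_eq_sum_range_succ_mk, Nat.sum_divisors_prime_pow hp]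
  refine Finset.sum_congr rfl fun i hi => Finset.sum_congr rfl fun j hj => ?_
  rw [Finset.mem_range] at hi hj
  rw [Nat.pow_div (by omega) hp.pos, Nat.pow_div (by omega) hp.pos]

theorem localSeries_ddelta {p : ℕ} (hp : p ≠ 1) : localSeries p ddelta = 1 := by
  refine PowerSeries.ext fun a => PowerSeries.ext fun b => ?_
  rw [coeff_coeff_localSeries, coeff_one]
  by_cases ha : a = 0 <;> by_cases hb : b = 0 <;> simp [ddelta, ha, hb, hp]

theorem Nat.gcd_pow_pow (p m n : ℕ) : Nat.gcd (p ^ m) (p ^ n) = p ^ min m n := by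
  rcases le_total m n with h | h
  · rw [min_eq_left h, Nat.gcd_eq_left (pow_dvd_pow p h)]
  · rw [min_eq_right h, Nat.gcd_eq_right (pow_dvd_pow p h)]

theorem localSeries_gcd_mul (p : ℕ) :
    localSeries p (fun m n => (Nat.gcd m n : ℂ)) * (1 - C (C (p : ℂ)) * X * C X)
      = PowerSeries.mk 1 + C (PowerSeries.mk 1) - 1 := by
  set Γ := localSeries p fun m n => (Nat.gcd m n : ℂ)
  rw [show Γ * (1 - C (C (p : ℂ)) * X * C X) = Γ - C (C (p : ℂ)) * (Γ * X * C X) by ring]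
  refine PowerSeries.ext fun a => PowerSeries.ext fun b => ?_
  simp only [map_sub, map_add, coeff_C_mul, coeff_mk, coeff_C, coeff_one, apply_ite (coeff b),
    map_zero, Pi.one_apply, Γ]
  obtain _ | a := a <;> obtain _ | b := b <;>
    simp only [coeff_coeff_localSeries, coeff_coeff_mul_C_X_zero, coeff_coeff_mul_C_X_succ,
      coeff_coeff_mul_X_zero, coeff_coeff_mul_X_succ, Nat.gcd_pow_pow]
  all_goals simp [min_add_add_right, pow_succ, mul_comm]

theorem localSeries_gcd_mul_numerator (p : ℕ) :
    localSeries p (fun m n => (Nat.gcd m n : ℂ)) *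
        ((1 - X) * (1 - C X) * (1 - C (C (p : ℂ)) * X * C X)) = 1 - X * C X := by
  have hx : (PowerSeries.mk 1 : ℂ⟦X⟧⟦X⟧) * (1 - X) = 1 := mk_one_mul_one_sub_eq_one _
  have hy : C (PowerSeries.mk 1 : ℂ⟦X⟧) * (1 - C X) = 1 := by
    rw [← map_one C, ← map_sub, ← map_mul, mk_one_mul_one_sub_eq_one, map_one]
  linear_combination
    (1 - X) * (1 - C X) * localSeries_gcd_mul p + (1 - C X) * hx + (1 - X) * hy

theorem localSeries_eq_of_dconv_gcd_eq_ddelta {μt : ℕ → ℕ → ℂ}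
    (hμ : dconv μt (fun n₁ n₂ => (Nat.gcd n₁ n₂ : ℂ)) = ddelta) {p : ℕ} (hp : p.Prime) :
    localSeries p μt
      = rescale X (PowerSeries.mk 1) * ((1 - X) * (1 - C X) * (1 - C (C (p : ℂ)) * X * C X)) := by
  set M := localSeries p μt
  set D : ℂ⟦X⟧⟦X⟧ := rescale X (PowerSeries.mk 1)
  have hinv : M * localSeries p (fun m n => (Nat.gcd m n : ℂ)) = 1 := by
    rw [← localSeries_dconv hp, hμ, localSeries_ddelta hp.ne_one]
  linear_combination (D * ((1 - X) * (1 - C X) * (1 - C (C (p : ℂ)) * X * C X))) * hinv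
    - (M * D) * localSeries_gcd_mul_numerator p - M * rescale_X_mk_one_mul (R := ℂ)

theorem stmt_15 (μt : ℕ → ℕ → ℂ)
    (hμ : dconv μt (fun n₁ n₂ => (Nat.gcd n₁ n₂ : ℂ)) = ddelta)
    (p : ℕ) (hp : p.Prime) :
    ∑' b : ℕ × ℕ, μt (p ^ b.1) (p ^ b.2) / (p : ℂ) ^ (b.1 + b.2)
      = (1 - 1 / (p : ℂ)) ^ 3 / (1 - 1 / (p : ℂ) ^ 2) := by
  have hp₀ : (p : ℂ) ≠ 0 := Nat.cast_ne_zero.mpr hp.ne_zero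
  have hnorm : ‖(p : ℂ)⁻¹ * (p : ℂ)⁻¹‖ < 1 := by
    have h : (p : ℝ)⁻¹ < 1 := inv_lt_one_of_one_lt₀ (by exact_mod_cast hp.one_lt)
    rw [norm_mul, norm_inv, Complex.norm_natCast]
    exact mul_lt_one_of_nonneg_of_lt_one_left (by positivity) h h.le
  have hsum := hasEvalSum_rescale_X_mk_one_mul hnorm (p : ℂ)
  rw [← localSeries_eq_of_dconv_gcd_eq_ddelta hμ hp, HasEvalSum] at hsum
  convert hsum.tsum_eq using 1
  · refine tsum_congr fun b => ?_
    rw [coeff_coeff_localSeries, div_eq_mul_inv, pow_add, mul_inv, inv_pow, inv_pow, mul_assoc]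
  · rw [mul_inv_cancel₀ hp₀, one_mul]
    ring
end

section
/- lim_{x → ∞} (1/(x² log x)) Σ_{n₁, n₂ ≤ x} σ(gcd(n₁, n₂)) = 1, where σ(n) is the sum of divisors of n. -/
open Filter Finset Topology

/-!
Writing σ(gcd(n₁, n₂)) = ∑_{d ∣ n₁, d ∣ n₂} d and summing over n₁, n₂ first turns the double sum
into ∑_{d ≤ x} d ⌊x/d⌋². Since x/d - 1 < ⌊x/d⌋ ≤ x/d, this is x² ∑_{d ≤ x} 1/d + O(x²), and the
harmonic sum is log x + O(1).
-/

theorem sum_Icc_sum_Icc_sum_divisors_gcd {R : Type*} [CommSemiring R] (f : ℕ → R) (N : ℕ) :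
    ∑ n₁ ∈ Icc 1 N, ∑ n₂ ∈ Icc 1 N, ∑ d ∈ (n₁.gcd n₂).divisors, f d =
      ∑ d ∈ Icc 1 N, f d * ((N / d : ℕ) : R) ^ 2 := by
  have hdivisors : ∀ n₁ ∈ Icc 1 N, ∀ n₂ ∈ Icc 1 N,
      (n₁.gcd n₂).divisors = {d ∈ Icc 1 N | d ∣ n₁ ∧ d ∣ n₂} := by
    intro n₁ h₁ n₂ h₂
    ext d
    simp only [mem_Icc] at h₁ h₂
    simp only [Nat.mem_divisors, Nat.dvd_gcd_iff, mem_filter, mem_Icc]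
    constructor
    · rintro ⟨hd, -⟩
      exact ⟨⟨Nat.pos_of_dvd_of_pos hd.1 (by omega), (Nat.le_of_dvd (by omega) hd.1).trans h₁.2⟩, hd⟩
    · rintro ⟨-, hd⟩
      exact ⟨hd, Nat.gcd_ne_zero_left (by omega)⟩
  have hcount : ∀ d, ∑ n ∈ Icc 1 N, (if d ∣ n then (1 : R) else 0) = ((N / d : ℕ) : R) := by
    intro d
    rw [sum_boole]
    exact congrArg Nat.cast (Nat.Ioc_filter_dvd_card_eq_div N d)
  calc ∑ n₁ ∈ Icc 1 N, ∑ n₂ ∈ Icc 1 N, ∑ d ∈ (n₁.gcd n₂).divisors, f d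
      = ∑ n₁ ∈ Icc 1 N, ∑ n₂ ∈ Icc 1 N, ∑ d ∈ Icc 1 N,
          (if d ∣ n₁ then 1 else 0) * (if d ∣ n₂ then 1 else 0) * f d := by
        refine sum_congr rfl fun n₁ h₁ => sum_congr rfl fun n₂ h₂ => ?_
        rw [hdivisors n₁ h₁ n₂ h₂, sum_filter]
        refine sum_congr rfl fun d _ => ?_
        split_ifs <;> simp_all
    _ = ∑ d ∈ Icc 1 N, f d * ((N / d : ℕ) : R) ^ 2 := by
        rw [sum_congr rfl fun n₁ _ => sum_comm, sum_comm]
        refine sum_congr rfl fun d _ => ?_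
        rw [mul_comm, ← hcount d, sq, sum_mul_sum, sum_mul]
        exact sum_congr rfl fun n₁ _ => (sum_mul ..).symm

theorem mul_floor_div_sq_le {x d : ℝ} (hx : 0 ≤ x) (hd : 0 < d) :
    d * (⌊x / d⌋₊ : ℝ) ^ 2 ≤ x ^ 2 / d := by
  calc d * (⌊x / d⌋₊ : ℝ) ^ 2 ≤ d * (x / d) ^ 2 := by
        gcongr
        exact Nat.floor_le (by positivity)
    _ = x ^ 2 / d := by field_simp

theorem sq_div_sub_two_mul_le_mul_floor_div_sq {x d : ℝ} (hd : 0 < d) (hdx : d ≤ x) :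
    x ^ 2 / d - 2 * x ≤ d * (⌊x / d⌋₊ : ℝ) ^ 2 := by
  have hfloor : x / d - 1 ≤ ⌊x / d⌋₊ := (Nat.sub_one_lt_floor _).le
  have hnonneg : 0 ≤ x / d - 1 := by rw [sub_nonneg, one_le_div hd]; exact hdx
  calc x ^ 2 / d - 2 * x ≤ x ^ 2 / d - 2 * x + d := by linarith
    _ = d * (x / d - 1) ^ 2 := by field_simp; ring
    _ ≤ d * (⌊x / d⌋₊ : ℝ) ^ 2 := by gcongr

theorem sum_mul_floor_div_sq_bounds {x : ℝ} (hx : 0 ≤ x) :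
    x ^ 2 * ∑ d ∈ Icc 1 ⌊x⌋₊, (d : ℝ)⁻¹ - 2 * x ^ 2 ≤
        ∑ d ∈ Icc 1 ⌊x⌋₊, (d : ℝ) * ((⌊x⌋₊ / d : ℕ) : ℝ) ^ 2 ∧
      ∑ d ∈ Icc 1 ⌊x⌋₊, (d : ℝ) * ((⌊x⌋₊ / d : ℕ) : ℝ) ^ 2 ≤
        x ^ 2 * ∑ d ∈ Icc 1 ⌊x⌋₊, (d : ℝ)⁻¹ := by
  simp only [← Nat.floor_div_natCast, mul_sum, ← div_eq_mul_inv]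
  constructor
  · calc ∑ d ∈ Icc 1 ⌊x⌋₊, x ^ 2 / d - 2 * x ^ 2
        ≤ ∑ d ∈ Icc 1 ⌊x⌋₊, (x ^ 2 / d - 2 * x) := by
          rw [sum_sub_distrib, sum_const, Nat.card_Icc, nsmul_eq_mul, Nat.add_sub_cancel]
          have := Nat.floor_le hx
          nlinarith
      _ ≤ _ := sum_le_sum fun d hd => by
          have hd := mem_Icc.mp hd
          exact sq_div_sub_two_mul_le_mul_floor_div_sq (by exact_mod_cast hd.1)
            ((Nat.cast_le.mpr hd.2).trans (Nat.floor_le hx))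
  · exact sum_le_sum fun d hd =>
      mul_floor_div_sq_le hx (by exact_mod_cast (mem_Icc.mp hd).1)

theorem log_le_sum_Icc_floor_inv {x : ℝ} (hx : 0 < x) :
    Real.log x ≤ ∑ d ∈ Icc 1 ⌊x⌋₊, (d : ℝ)⁻¹ := by
  have := log_add_one_le_harmonic ⌊x⌋₊
  rw [harmonic_eq_sum_Icc] at this
  push_cast at this
  exact (Real.log_le_log hx (Nat.lt_floor_add_one x).le).trans this

theorem sum_Icc_floor_inv_le_one_add_log {x : ℝ} (hx : 1 ≤ x) :
    ∑ d ∈ Icc 1 ⌊x⌋₊, (d : ℝ)⁻¹ ≤ 1 + Real.log x := by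
  have := harmonic_le_one_add_log ⌊x⌋₊
  rw [harmonic_eq_sum_Icc] at this
  push_cast at this
  have hfloor : (0 : ℝ) < ⌊x⌋₊ := by exact_mod_cast Nat.floor_pos.mpr hx
  linarith [Real.log_le_log hfloor (Nat.floor_le (by linarith))]

theorem abs_mul_sum_mul_floor_div_sq_sub_one_le {x : ℝ} (hx : 1 < x) :
    |1 / (x ^ 2 * Real.log x) * ∑ d ∈ Icc 1 ⌊x⌋₊, (d : ℝ) * ((⌊x⌋₊ / d : ℕ) : ℝ) ^ 2 - 1| ≤
      2 / Real.log x := by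
  have hx₀ : 0 < x := zero_lt_one.trans hx
  have hlog : 0 < Real.log x := Real.log_pos hx
  have hden : 0 < x ^ 2 * Real.log x := by positivity
  obtain ⟨hS_lower, hS_upper⟩ := sum_mul_floor_div_sq_bounds hx₀.le
  have hH_lower := mul_le_mul_of_nonneg_left (log_le_sum_Icc_floor_inv hx₀) (sq_nonneg x)
  have hH_upper := mul_le_mul_of_nonneg_left (sum_Icc_floor_inv_le_one_add_log hx.le) (sq_nonneg x)
  set S := ∑ d ∈ Icc 1 ⌊x⌋₊, (d : ℝ) * ((⌊x⌋₊ / d : ℕ) : ℝ) ^ 2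
  have hrhs : 2 / Real.log x * (x ^ 2 * Real.log x) = 2 * x ^ 2 := by field_simp
  rw [show 1 / (x ^ 2 * Real.log x) * S - 1 = (S - x ^ 2 * Real.log x) / (x ^ 2 * Real.log x) by
    field_simp, abs_div, abs_of_pos hden, div_le_iff₀ hden, hrhs, abs_sub_le_iff]
  constructor <;> linarith

theorem stmt_16 :
    Tendsto (fun x : ℝ =>
      (1 / (x ^ 2 * Real.log x)) *
        ∑ n₁ ∈ Finset.Icc 1 ⌊x⌋₊, ∑ n₂ ∈ Finset.Icc 1 ⌊x⌋₊,
          ∑ d ∈ (Nat.gcd n₁ n₂).divisors, (d : ℝ))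
      atTop (𝓝 1) := by
  simp only [sum_Icc_sum_Icc_sum_divisors_gcd]
  rw [tendsto_iff_norm_sub_tendsto_zero]
  refine squeeze_zero' (Eventually.of_forall fun _ => norm_nonneg _) ?_
    ((tendsto_const_nhds (x := (2 : ℝ))).div_atTop Real.tendsto_log_atTop)
  filter_upwards [eventually_gt_atTop 1] with x hx
  exact abs_mul_sum_mul_floor_div_sq_sub_one_le hx
end
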